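/- Let G' be the bipartite graph built from a graph G with vertex set {r} ∪ {v' : v ∈ V(G)} ∪ V(G), edges {rv : v ∈ V(G)} ∪ {v'u : u ∈ N_G[v]}, and terminal set X = {r} ∪ {v' : v ∈ V(G)}. If T is a connected induced subgraph of G' containing X, then V(T) ∩ V(G) is a dominating set of G. -/

import Mathlib

open SimpleGraph

/-- The graph `G'` built from `G`: vertices are a root `r`, a copy `v'` of each vertex
`v` of `G`, and the vertices of `G`; the root is adjacent to every original vertex,
and the copy `v'` is adjacent to the closed neighborhood of `v` among originals. -/
def steinerAux {V : Type*} (G : SimpleGraph V) : SimpleGraph (Unit ⊕ V ⊕ V) :=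
  SimpleGraph.fromRel fun a b =>
    match a, b with
    | Sum.inl _, Sum.inr (Sum.inr _) => True
    | Sum.inr (Sum.inl v), Sum.inr (Sum.inr u) => u = v ∨ G.Adj v u
    | _, _ => False

/-- The terminal set `X = {r} ∪ {v' : v ∈ V(G)}`. -/
def steinerTerminals (V : Type*) : Set (Unit ⊕ V ⊕ V) :=
  Set.range Sum.inl ∪ Set.range (fun v : V => Sum.inr (Sum.inl v))

theorem steinerAux_adj_copy_iff {V : Type*} {G : SimpleGraph V} {v : V} {w : Unit ⊕ V ⊕ V} :
    (steinerAux G).Adj (Sum.inr (Sum.inl v)) w ↔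
      ∃ u : V, w = Sum.inr (Sum.inr u) ∧ (u = v ∨ G.Adj v u) := by
  rcases w with _ | w | u <;> simp [steinerAux, eq_comm]

theorem dominating_of_connected_containing_terminals_general {V : Type*}
    (G : SimpleGraph V) (A : Set (Unit ⊕ V ⊕ V))
    (hX : steinerTerminals V ⊆ A)
    (hconn : ((steinerAux G).induce A).Connected) :
    ∀ v : V, Sum.inr (Sum.inr v) ∈ A ∨
      ∃ u : V, Sum.inr (Sum.inr u) ∈ A ∧ G.Adj u v := by
  intro v
  have hroot : Sum.inl () ∈ A := hX (Or.inl ⟨(), rfl⟩)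
  have hcopy : Sum.inr (Sum.inl v) ∈ A := hX (Or.inr ⟨v, rfl⟩)
  have : Nontrivial A := ⟨⟨_, hroot⟩, ⟨_, hcopy⟩, by simp⟩
  obtain ⟨⟨w, hw⟩, hadj⟩ := hconn.preconnected.exists_adj_of_nontrivial ⟨_, hcopy⟩
  have hadj : (steinerAux G).Adj (Sum.inr (Sum.inl v)) w := hadj
  obtain ⟨u, rfl, rfl | huv⟩ := steinerAux_adj_copy_iff.mp hadj
  · exact Or.inl hw
  · exact Or.inr ⟨u, hw, huv.symm⟩

/-- If `A` spans a connected induced subgraph of `G'` containing the terminal set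
`X`, then the original vertices of `G` lying in `A` form a dominating set of `G`. -/
theorem dominating_of_connected_containing_terminals {V : Type*} [Nonempty V]
    (G : SimpleGraph V) (A : Set (Unit ⊕ V ⊕ V))
    (hX : steinerTerminals V ⊆ A)
    (hconn : ((steinerAux G).induce A).Connected) :
    ∀ v : V, Sum.inr (Sum.inr v) ∈ A ∨
      ∃ u : V, Sum.inr (Sum.inr u) ∈ A ∧ G.Adj u v :=
  dominating_of_connected_containing_terminals_general G A hX hconn
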